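/- arXiv:2509.16316 — 2 statements merged into one kernel-verified Lean document; each statement's English description precedes it below -/
import Mathlib

section
/- Fix M ∈ ℤ and smooth nonvanishing functions F_n(t,a) for n ∈ ℤ with F_m ≡ 1 for all m ≤ M. Define a_n = F_{n+1}F_{n-1}/F_n², u_n = ∂_a log F_n, and the operators M = ∂_t + ((u_{n+1}-u_{n-1})/2)·R + (1/2)R² and M̄ = ∂_a + R, where R is the weighted shift (Rf)_n = a_n f_{n-1} acting on sequences of smooth functions f_n(t,a). Then [M, M̄] = 0 (as operators on such sequences) if and only if for all n: F_{n-1}∂_t F_n - F_n ∂_t F_{n-1} - (1/2)F_{n-1}∂_a²F_n + ∂_a F_n ∂_a F_{n-1} - (1/2)F_n ∂_a²F_{n-1} = 0. -/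
noncomputable section

/-- `a_n = F_{n+1} F_{n-1} / F_n²`. -/
def aCoeff (F : ℤ → ℝ → ℝ → ℝ) (n : ℤ) (t a : ℝ) : ℝ :=
  F (n + 1) t a * F (n - 1) t a / (F n t a) ^ 2

/-- `u_n = ∂_a log F_n`. -/
def uCoeff (F : ℤ → ℝ → ℝ → ℝ) (n : ℤ) (t a : ℝ) : ℝ :=
  deriv (fun b => Real.log (F n t b)) a

/-- The weighted backward shift `(R f)_n = a_n f_{n-1}`. -/
def Rop (F : ℤ → ℝ → ℝ → ℝ) (f : ℤ → ℝ → ℝ → ℝ) : ℤ → ℝ → ℝ → ℝ :=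
  fun n t a => aCoeff F n t a * f (n - 1) t a

/-- `M = ∂_t + ((u_{n+1} - u_{n-1})/2) R + (1/2) R²`. -/
def Mop (F : ℤ → ℝ → ℝ → ℝ) (f : ℤ → ℝ → ℝ → ℝ) : ℤ → ℝ → ℝ → ℝ :=
  fun n t a =>
    deriv (fun s => f n s a) t
      + ((uCoeff F (n + 1) t a - uCoeff F (n - 1) t a) / 2) * Rop F f n t a
      + (1 / 2) * Rop F (Rop F f) n t a

/-- `M̄ = ∂_a + R`. -/
def Mbar (F : ℤ → ℝ → ℝ → ℝ) (f : ℤ → ℝ → ℝ → ℝ) : ℤ → ℝ → ℝ → ℝ :=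
  fun n t a => deriv (fun b => f n t b) a + Rop F f n t a


open Function


/-- t-partial derivative -/
def pt' (g : ℝ → ℝ → ℝ) (t a : ℝ) : ℝ := deriv (fun s => g s a) t
/-- a-partial derivative -/
def pa' (g : ℝ → ℝ → ℝ) (t a : ℝ) : ℝ := deriv (fun b => g t b) a

/-- smooth in both variables -/
abbrev Sm (g : ℝ → ℝ → ℝ) : Prop := ContDiff ℝ (⊤ : ℕ∞) (uncurry g)

lemma curve_t (a : ℝ) : ∀ t : ℝ, HasDerivAt (fun s : ℝ => ((s, a) : ℝ × ℝ)) (1, 0) t :=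
  fun t => (hasDerivAt_id t).prodMk (hasDerivAt_const t a)
lemma curve_a (t : ℝ) : ∀ a : ℝ, HasDerivAt (fun b : ℝ => ((t, b) : ℝ × ℝ)) (0, 1) a :=
  fun a => (hasDerivAt_const a t).prodMk (hasDerivAt_id a)

lemma Sm.hasDerivAt_t {g : ℝ → ℝ → ℝ} (hg : Sm g) (t a : ℝ) :
    HasDerivAt (fun s => g s a) (fderiv ℝ (uncurry g) (t, a) (1, 0)) t := by
  have h1 : HasFDerivAt (uncurry g) (fderiv ℝ (uncurry g) (t, a)) (t, a) :=
    (hg.differentiable (by simp) (t, a)).hasFDerivAt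
  have := h1.comp_hasDerivAt t (curve_t a t)
  exact this

lemma Sm.hasDerivAt_a' {g : ℝ → ℝ → ℝ} (hg : Sm g) (t a : ℝ) :
    HasDerivAt (fun b => g t b) (fderiv ℝ (uncurry g) (t, a) (0, 1)) a := by
  have h1 : HasFDerivAt (uncurry g) (fderiv ℝ (uncurry g) (t, a)) (t, a) :=
    (hg.differentiable (by simp) (t, a)).hasFDerivAt
  have := h1.comp_hasDerivAt a (curve_a t a)
  exact this

lemma Sm.pt_eq {g : ℝ → ℝ → ℝ} (hg : Sm g) (t a : ℝ) :
    pt' g t a = fderiv ℝ (uncurry g) (t, a) (1, 0) := (hg.hasDerivAt_t t a).deriv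
lemma Sm.pa_eq {g : ℝ → ℝ → ℝ} (hg : Sm g) (t a : ℝ) :
    pa' g t a = fderiv ℝ (uncurry g) (t, a) (0, 1) := (hg.hasDerivAt_a' t a).deriv

lemma Sm.hasDerivAt_pt {g : ℝ → ℝ → ℝ} (hg : Sm g) (t a : ℝ) :
    HasDerivAt (fun s => g s a) (pt' g t a) t := by
  rw [hg.pt_eq]; exact hg.hasDerivAt_t t a
lemma Sm.hasDerivAt_pa {g : ℝ → ℝ → ℝ} (hg : Sm g) (t a : ℝ) :
    HasDerivAt (fun b => g t b) (pa' g t a) a := by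
  rw [hg.pa_eq]; exact hg.hasDerivAt_a' t a

lemma Sm.pt {g : ℝ → ℝ → ℝ} (hg : Sm g) : Sm (pt' g) := by
  have h : uncurry (pt' g) = fun p : ℝ × ℝ => fderiv ℝ (uncurry g) p (1, 0) := by
    funext p
    exact hg.pt_eq p.1 p.2
  show ContDiff ℝ (⊤ : ℕ∞) (uncurry (pt' g))
  rw [h]
  exact (hg.fderiv_right (by simp)).clm_apply contDiff_const

lemma Sm.pa {g : ℝ → ℝ → ℝ} (hg : Sm g) : Sm (pa' g) := by
  have h : uncurry (pa' g) = fun p : ℝ × ℝ => fderiv ℝ (uncurry g) p (0, 1) := by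
    funext p
    exact hg.pa_eq p.1 p.2
  show ContDiff ℝ (⊤ : ℕ∞) (uncurry (pa' g))
  rw [h]
  exact (hg.fderiv_right (by simp)).clm_apply contDiff_const

/-- Clairaut -/
lemma Sm.symm2 {g : ℝ → ℝ → ℝ} (hg : Sm g) (t a : ℝ) :
    pa' (pt' g) t a = pt' (pa' g) t a := by
  set G := uncurry g
  have hdG : ∀ y, HasFDerivAt G (fderiv ℝ G y) y := fun y =>
    (hg.differentiable (by simp) y).hasFDerivAt
  have hd2 : HasFDerivAt (fderiv ℝ G) (fderiv ℝ (fderiv ℝ G) (t, a)) (t, a) :=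
    (((hg.fderiv_right (m := (⊤ : ℕ∞)) ((by simp))).differentiable (by simp)) (t, a)).hasFDerivAt
  have hsymm := second_derivative_symmetric hdG hd2
  have e1 : pa' (pt' g) t a = fderiv ℝ (fderiv ℝ G) (t, a) (0, 1) (1, 0) := by
    have hfun : (fun b => pt' g t b) = fun b => fderiv ℝ G (t, b) (1, 0) := by
      funext b; exact hg.pt_eq t b
    have h2 : HasDerivAt (fun b => fderiv ℝ G (t, b) (1, 0))
        (fderiv ℝ (fderiv ℝ G) (t, a) (0, 1) (1, 0)) a := by
      have hc : HasDerivAt (fun b => fderiv ℝ G (t, b))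
          (fderiv ℝ (fderiv ℝ G) (t, a) (0, 1)) a :=
        hd2.comp_hasDerivAt a (curve_a t a)
      simpa using hc.clm_apply (hasDerivAt_const a ((1:ℝ), (0:ℝ)))
    rw [pa', hfun]; exact h2.deriv
  have e2 : pt' (pa' g) t a = fderiv ℝ (fderiv ℝ G) (t, a) (1, 0) (0, 1) := by
    have hfun : (fun s => pa' g s a) = fun s => fderiv ℝ G (s, a) (0, 1) := by
      funext s; exact hg.pa_eq s a
    have h2 : HasDerivAt (fun s => fderiv ℝ G (s, a) (0, 1))
        (fderiv ℝ (fderiv ℝ G) (t, a) (1, 0) (0, 1)) t := by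
      have hc : HasDerivAt (fun s => fderiv ℝ G (s, a))
          (fderiv ℝ (fderiv ℝ G) (t, a) (1, 0)) t :=
        hd2.comp_hasDerivAt t (curve_t a t)
      simpa using hc.clm_apply (hasDerivAt_const t ((0:ℝ), (1:ℝ)))
    rw [pt', hfun]; exact h2.deriv
  rw [e1, e2, hsymm]

def CAx (F : ℤ → ℝ → ℝ → ℝ) (n : ℤ) (t a : ℝ) : ℝ :=
  (uCoeff F (n + 1) t a - uCoeff F (n - 1) t a) / 2 * aCoeff F n t a
def Wx (F : ℤ → ℝ → ℝ → ℝ) (n : ℤ) (t a : ℝ) : ℝ :=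
  aCoeff F n t a * aCoeff F (n - 1) t a
def Gx (F : ℤ → ℝ → ℝ → ℝ) (n : ℤ) (t a : ℝ) : ℝ :=
  F (n - 1) t a * pt' (F n) t a - F n t a * pt' (F (n - 1)) t a
    - (1/2) * F (n - 1) t a * pa' (pa' (F n)) t a
    + pa' (F n) t a * pa' (F (n - 1)) t a
    - (1/2) * F n t a * pa' (pa' (F (n - 1))) t a

section
variable {F : ℤ → ℝ → ℝ → ℝ}

lemma uCoeff_eq (hFn : Sm (F n)) (h0 : F n t a ≠ 0) :
    uCoeff F n t a = pa' (F n) t a / F n t a := by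
  unfold uCoeff
  exact (HasDerivAt.log (hFn.hasDerivAt_pa t a) h0).deriv

lemma aCoeff_ne (hne : ∀ n t a, F n t a ≠ 0) (n : ℤ) (t a : ℝ) : aCoeff F n t a ≠ 0 :=
  div_ne_zero (mul_ne_zero (hne _ _ _) (hne _ _ _)) (pow_ne_zero _ (hne _ _ _))

lemma smA (hF : ∀ n, ContDiff ℝ (⊤ : ℕ∞) (Function.uncurry (F n)))
    (hne : ∀ n t a, F n t a ≠ 0) (n : ℤ) : Sm (aCoeff F n) := by
  have h : uncurry (aCoeff F n)
      = fun p => uncurry (F (n+1)) p * uncurry (F (n-1)) p / uncurry (F n) p ^ 2 := rfl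
  show ContDiff ℝ (⊤ : ℕ∞) (uncurry (aCoeff F n))
  rw [h]
  exact ((hF (n+1)).mul (hF (n-1))).div ((hF n).pow 2) (fun p => pow_ne_zero _ (hne n p.1 p.2))

lemma smCA (hF : ∀ n, ContDiff ℝ (⊤ : ℕ∞) (Function.uncurry (F n)))
    (hne : ∀ n t a, F n t a ≠ 0) (n : ℤ) : Sm (CAx F n) := by
  have h : CAx F n = fun t a =>
      (pa' (F (n+1)) t a / F (n+1) t a - pa' (F (n-1)) t a / F (n-1) t a) / 2
        * aCoeff F n t a := by
    funext t a
    rw [CAx, uCoeff_eq (hF (n+1)) (hne (n+1) t a), uCoeff_eq (hF (n-1)) (hne (n-1) t a)]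
  rw [h]
  apply ContDiff.mul
  · apply ContDiff.div _ contDiff_const (fun _ => two_ne_zero)
    exact ContDiff.sub
      ((Sm.pa (hF (n+1))).div (hF (n+1)) (fun p => hne (n+1) p.1 p.2))
      ((Sm.pa (hF (n-1))).div (hF (n-1)) (fun p => hne (n-1) p.1 p.2))
  · exact smA hF hne n

lemma smW (hF : ∀ n, ContDiff ℝ (⊤ : ℕ∞) (Function.uncurry (F n)))
    (hne : ∀ n t a, F n t a ≠ 0) (n : ℤ) : Sm (Wx F n) :=
  ContDiff.mul (smA hF hne n) (smA hF hne (n-1))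

end

section
variable {F : ℤ → ℝ → ℝ → ℝ}

lemma key_iden (hF : ∀ n, ContDiff ℝ (⊤ : ℕ∞) (Function.uncurry (F n)))
    (hne : ∀ n t a, F n t a ≠ 0) (n : ℤ) (t a : ℝ) :
    pt' (aCoeff F n) t a - pa' (CAx F n) t a =
      aCoeff F n t a * (Gx F (n + 1) t a / (F (n + 1) t a * F n t a)
        - Gx F n t a / (F n t a * F (n - 1) t a)) := by
  have HT : ∀ k, HasDerivAt (fun s => F k s a) (pt' (F k) t a) t :=
    fun k => Sm.hasDerivAt_pt (hF k) t a
  have HA : ∀ k b, HasDerivAt (fun b' => F k t b') (pa' (F k) t b) b :=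
    fun k b => Sm.hasDerivAt_pa (hF k) t b
  have HAA : ∀ k, HasDerivAt (fun b => pa' (F k) t b) (pa' (pa' (F k)) t a) a :=
    fun k => Sm.hasDerivAt_pa (Sm.pa (hF k)) t a
  have h1 : F (n+1) t a ≠ 0 := hne _ t a
  have h0 : F n t a ≠ 0 := hne _ t a
  have hm : F (n-1) t a ≠ 0 := hne _ t a
  have e1 : pt' (aCoeff F n) t a =
      ((pt' (F (n+1)) t a * F (n-1) t a + F (n+1) t a * pt' (F (n-1)) t a) * F n t a ^ 2
        - F (n+1) t a * F (n-1) t a * (((2:ℕ):ℝ) * F n t a ^ (2-1) * pt' (F n) t a))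
        / (F n t a ^ 2) ^ 2 :=
    (((HT (n+1)).mul (HT (n-1))).div ((HT n).pow 2) (pow_ne_zero 2 h0)).deriv
  have e2fun : (fun b => CAx F n t b) = (fun b =>
      (pa' (F (n+1)) t b / F (n+1) t b - pa' (F (n-1)) t b / F (n-1) t b) / 2
        * (F (n+1) t b * F (n-1) t b / F n t b ^ 2)) := by
    funext b
    rw [CAx, uCoeff_eq (hF (n+1)) (hne (n+1) t b), uCoeff_eq (hF (n-1)) (hne (n-1) t b), aCoeff]
  have e2 : pa' (CAx F n) t a =
      ((pa' (pa' (F (n+1))) t a * F (n+1) t a - pa' (F (n+1)) t a * pa' (F (n+1)) t a) / F (n+1) t a ^ 2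
        - (pa' (pa' (F (n-1))) t a * F (n-1) t a - pa' (F (n-1)) t a * pa' (F (n-1)) t a) / F (n-1) t a ^ 2) / 2
        * (F (n+1) t a * F (n-1) t a / F n t a ^ 2)
      + (pa' (F (n+1)) t a / F (n+1) t a - pa' (F (n-1)) t a / F (n-1) t a) / 2
        * (((pa' (F (n+1)) t a * F (n-1) t a + F (n+1) t a * pa' (F (n-1)) t a) * F n t a ^ 2
          - F (n+1) t a * F (n-1) t a * (((2:ℕ):ℝ) * F n t a ^ (2-1) * pa' (F n) t a))
          / (F n t a ^ 2) ^ 2) := by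
    rw [pa', e2fun]
    exact (((((HAA (n+1)).div (HA (n+1) a) h1).sub ((HAA (n-1)).div (HA (n-1) a) hm)).div_const 2).mul
      (((HA (n+1) a).mul (HA (n-1) a)).div (((HA n a)).pow 2) (pow_ne_zero 2 h0))).deriv
  rw [e1, e2]
  simp only [Gx, aCoeff, Int.add_sub_cancel]
  push_cast
  field_simp
  ring

lemma B_iden (hF : ∀ n, ContDiff ℝ (⊤ : ℕ∞) (Function.uncurry (F n)))
    (hne : ∀ n t a, F n t a ≠ 0) (n : ℤ) (t a : ℝ) :
    (uCoeff F (n+1) t a - uCoeff F (n-1) t a) / 2 * (aCoeff F n t a * aCoeff F (n-1) t a)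
      = 1/2 * pa' (Wx F n) t a
        + (uCoeff F (n-1+1) t a - uCoeff F (n-1-1) t a) / 2
          * (aCoeff F n t a * aCoeff F (n-1) t a) := by
  have HA : ∀ k b, HasDerivAt (fun b' => F k t b') (pa' (F k) t b) b :=
    fun k b => Sm.hasDerivAt_pa (hF k) t b
  have h1 : F (n+1) t a ≠ 0 := hne _ t a
  have h0 : F n t a ≠ 0 := hne _ t a
  have hm : F (n-1) t a ≠ 0 := hne _ t a
  have hm2 : F (n-1-1) t a ≠ 0 := hne _ t a
  have e2fun : (fun b => Wx F n t b) = (fun b =>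
      (F (n+1) t b * F (n-1) t b / F n t b ^ 2)
        * (F n t b * F (n-1-1) t b / F (n-1) t b ^ 2)) := by
    funext b
    rw [Wx, aCoeff, aCoeff]
    rw [Int.sub_add_cancel]
  have eW : pa' (Wx F n) t a =
      (((pa' (F (n+1)) t a * F (n-1) t a + F (n+1) t a * pa' (F (n-1)) t a) * F n t a ^ 2
        - F (n+1) t a * F (n-1) t a * (((2:ℕ):ℝ) * F n t a ^ (2-1) * pa' (F n) t a))
        / (F n t a ^ 2) ^ 2) * (F n t a * F (n-1-1) t a / F (n-1) t a ^ 2)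
      + (F (n+1) t a * F (n-1) t a / F n t a ^ 2)
        * (((pa' (F n) t a * F (n-1-1) t a + F n t a * pa' (F (n-1-1)) t a) * F (n-1) t a ^ 2
          - F n t a * F (n-1-1) t a * (((2:ℕ):ℝ) * F (n-1) t a ^ (2-1) * pa' (F (n-1)) t a))
          / (F (n-1) t a ^ 2) ^ 2) := by
    rw [pa', e2fun]
    exact ((((HA (n+1) a).mul (HA (n-1) a)).div ((HA n a).pow 2) (pow_ne_zero 2 h0)).mul
      (((HA n a).mul (HA (n-1-1) a)).div ((HA (n-1) a).pow 2) (pow_ne_zero 2 hm))).deriv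
  rw [eW, uCoeff_eq (hF (n+1)) h1, uCoeff_eq (hF (n-1)) hm,
    uCoeff_eq (hF (n-1-1)) hm2]
  rw [show (n:ℤ)-1+1 = n from Int.sub_add_cancel n 1, uCoeff_eq (hF n) h0]
  simp only [aCoeff, Int.sub_add_cancel]
  push_cast
  field_simp
  ring

section
variable {F : ℤ → ℝ → ℝ → ℝ} {M₀ : ℤ}

lemma Gx_bd (hbd : ∀ m ≤ M₀, ∀ t a, F m t a = 1) {m : ℤ} (hm : m ≤ M₀) (t a : ℝ) :
    Gx F m t a = 0 := by
  have h1 : ∀ k, k ≤ M₀ → ∀ t a : ℝ, pt' (F k) t a = 0 := fun k hk t a => by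
    rw [pt', show (fun s => F k s a) = fun _ => (1:ℝ) from funext fun s => hbd k hk s a]
    exact deriv_const t 1
  have h2 : ∀ k, k ≤ M₀ → ∀ t a : ℝ, pa' (F k) t a = 0 := fun k hk t a => by
    rw [pa', show (fun b => F k t b) = fun _ => (1:ℝ) from funext fun b => hbd k hk t b]
    exact deriv_const a 1
  have h3 : ∀ k, k ≤ M₀ → ∀ t a : ℝ, pa' (pa' (F k)) t a = 0 := fun k hk t a => by
    rw [pa', show (fun b => pa' (F k) t b) = fun _ => (0:ℝ) from funext fun b => h2 k hk t b]
    exact deriv_const a 0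
  have hm' : m - 1 ≤ M₀ := by omega
  rw [Gx, h1 m hm, h1 (m-1) hm', h2 m hm, h2 (m-1) hm', h3 m hm, h3 (m-1) hm']
  ring

lemma Gx_eq (F : ℤ → ℝ → ℝ → ℝ) (n : ℤ) (t a : ℝ) : Gx F n t a =
    F (n - 1) t a * deriv (fun s => F n s a) t
      - F n t a * deriv (fun s => F (n - 1) s a) t
      - (1 / 2) * F (n - 1) t a * iteratedDeriv 2 (fun b => F n t b) a
      + deriv (fun b => F n t b) a * deriv (fun b => F (n - 1) t b) a
      - (1 / 2) * F n t a * iteratedDeriv 2 (fun b => F (n - 1) t b) a := by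
  have h2 : ∀ g : ℝ → ℝ, iteratedDeriv 2 g a = deriv (deriv g) a := fun g => by
    rw [iteratedDeriv_succ, iteratedDeriv_one]
  rw [h2, h2]
  rfl

end

/-- Zero-curvature condition for the RBM equation:  `[M, M̄] = 0` on sequences of
smooth functions iff the bilinear RBM equation holds. -/
theorem rbm_zero_curvature (F : ℤ → ℝ → ℝ → ℝ) (M₀ : ℤ)
    (hF : ∀ n, ContDiff ℝ (⊤ : ℕ∞) (Function.uncurry (F n)))
    (hne : ∀ n t a, F n t a ≠ 0)
    (hbd : ∀ m ≤ M₀, ∀ t a, F m t a = 1) :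
    (∀ f : ℤ → ℝ → ℝ → ℝ, (∀ n, ContDiff ℝ (⊤ : ℕ∞) (Function.uncurry (f n))) →
        ∀ (n : ℤ) (t a : ℝ), Mop F (Mbar F f) n t a = Mbar F (Mop F f) n t a)
    ↔ (∀ (n : ℤ) (t a : ℝ),
        F (n - 1) t a * deriv (fun s => F n s a) t
          - F n t a * deriv (fun s => F (n - 1) s a) t
          - (1 / 2) * F (n - 1) t a * iteratedDeriv 2 (fun b => F n t b) a
          + deriv (fun b => F n t b) a * deriv (fun b => F (n - 1) t b) a
          - (1 / 2) * F n t a * iteratedDeriv 2 (fun b => F (n - 1) t b) a = 0) := by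
  constructor
  · intro H n t a
    have hkey : ∀ (k : ℤ), pt' (aCoeff F k) t a = pa' (CAx F k) t a := by
      intro k
      have H' := H (fun j (_ : ℝ) (_ : ℝ) => if j = k - 1 then (1:ℝ) else 0)
          (fun j => contDiff_const) k t a
      simp only [Mop, Mbar, Rop] at H'
      simp only [iff_false_intro (show ¬((k:ℤ) = k - 1) by omega),
        iff_false_intro (show ¬((k:ℤ) - 1 - 1 = k - 1) by omega),
        iff_false_intro (show ¬((k:ℤ) - 1 - 1 - 1 = k - 1) by omega),
        eq_self_iff_true, if_true, if_false, deriv_const,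
        mul_zero, mul_one, add_zero, zero_add] at H'
      exact H'
    have hstep : ∀ k : ℤ, Gx F (k + 1) t a / (F (k + 1) t a * F k t a)
        = Gx F k t a / (F k t a * F (k - 1) t a) := by
      intro k
      have hh := key_iden hF hne k t a
      rw [hkey k, sub_self] at hh
      have h2 := (mul_eq_zero.mp hh.symm).resolve_left (aCoeff_ne hne k t a)
      exact sub_eq_zero.mp h2
    have hGz : ∀ k : ℤ, Gx F k t a = 0 := by
      have hle : ∀ k, k ≤ M₀ → Gx F k t a = 0 := fun k hk => Gx_bd hbd hk t a
      have hge : ∀ k, M₀ ≤ k → Gx F k t a = 0 := by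
        intro k hk
        refine Int.le_induction (motive := fun k _ => Gx F k t a = 0) ?_ ?_ k hk
        · exact hle M₀ le_rfl
        · intro m hm ih
          have hs := hstep m
          rw [ih, zero_div] at hs
          exact (div_eq_zero_iff.mp hs).resolve_right
            (mul_ne_zero (hne _ _ _) (hne _ _ _))
      intro k
      rcases le_or_gt k M₀ with h | h
      · exact hle k h
      · exact hge k h.le
    rw [← Gx_eq F n t a]
    exact hGz n
  · intro hRBM f hf n t a
    have hGz : ∀ (k : ℤ) (t a : ℝ), Gx F k t a = 0 := fun k t a => by
      rw [Gx_eq]; exact hRBM k t a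
    have hkey : pt' (aCoeff F n) t a = pa' (CAx F n) t a := by
      have hh := key_iden hF hne n t a
      rw [hGz, hGz, zero_div, zero_div, sub_zero, mul_zero] at hh
      linarith [hh]
    have hB := B_iden hF hne n t a
    have hcl := Sm.symm2 (hf n) t a
    simp only [Mop, Mbar, Rop]
    have hDL : HasDerivAt (fun s => pa' (f n) s a + aCoeff F n s a * f (n - 1) s a)
        (pt' (pa' (f n)) t a + (pt' (aCoeff F n) t a * f (n - 1) t a
          + aCoeff F n t a * pt' (f (n - 1)) t a)) t :=
      ((Sm.pa (hf n)).hasDerivAt_pt t a).add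
        ((Sm.hasDerivAt_pt (smA hF hne n) t a).mul (Sm.hasDerivAt_pt (hf (n-1)) t a))
    have eL : deriv (fun s => deriv (fun b => f n s b) a + aCoeff F n s a * f (n - 1) s a) t
        = pt' (pa' (f n)) t a + (pt' (aCoeff F n) t a * f (n - 1) t a
          + aCoeff F n t a * pt' (f (n - 1)) t a) := hDL.deriv
    have hfunR : (fun b => deriv (fun s => f n s b) t
          + (uCoeff F (n + 1) t b - uCoeff F (n - 1) t b) / 2 * (aCoeff F n t b * f (n - 1) t b)
          + 1 / 2 * (aCoeff F n t b * (aCoeff F (n - 1) t b * f (n - 1 - 1) t b)))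
        = (fun b => pt' (f n) t b + CAx F n t b * f (n - 1) t b
            + 1 / 2 * (Wx F n t b * f (n - 1 - 1) t b)) := by
      funext b
      simp only [pt', CAx, Wx]
      ring
    have hDR : HasDerivAt (fun b => pt' (f n) t b + CAx F n t b * f (n - 1) t b
          + 1 / 2 * (Wx F n t b * f (n - 1 - 1) t b))
        (pa' (pt' (f n)) t a + (pa' (CAx F n) t a * f (n - 1) t a
            + CAx F n t a * pa' (f (n - 1)) t a)
          + 1 / 2 * (pa' (Wx F n) t a * f (n - 1 - 1) t a
            + Wx F n t a * pa' (f (n - 1 - 1)) t a)) a :=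
      ((Sm.hasDerivAt_pa (Sm.pt (hf n)) t a).add
        ((Sm.hasDerivAt_pa (smCA hF hne n) t a).mul (Sm.hasDerivAt_pa (hf (n-1)) t a))).add
        (((Sm.hasDerivAt_pa (smW hF hne n) t a).mul
          (Sm.hasDerivAt_pa (hf (n-1-1)) t a)).const_mul (1/2))
    have eR : deriv (fun b => deriv (fun s => f n s b) t
          + (uCoeff F (n + 1) t b - uCoeff F (n - 1) t b) / 2 * (aCoeff F n t b * f (n - 1) t b)
          + 1 / 2 * (aCoeff F n t b * (aCoeff F (n - 1) t b * f (n - 1 - 1) t b))) a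
        = pa' (pt' (f n)) t a + (pa' (CAx F n) t a * f (n - 1) t a
            + CAx F n t a * pa' (f (n - 1)) t a)
          + 1 / 2 * (pa' (Wx F n) t a * f (n - 1 - 1) t a
            + Wx F n t a * pa' (f (n - 1 - 1)) t a) := by
      rw [hfunR]
      exact hDR.deriv
    rw [eL, eR]
    simp only [CAx, Wx]
    simp only [pt', pa'] at hcl hkey hB ⊢
    linear_combination (-1 : ℝ) * hcl + f (n - 1) t a * hkey + f (n - 1 - 1) t a * hB


end
end
end

section
/- Let y_n ∈ ℝ for 0 ≤ n, and f_n : [0,∞) → ℝ continuous with f_n(0) = 0. Define the reflection process f_0^Λ(t) = y_0 + f_0(t) and f_n^Λ(t) = y_n + f_n(t) - sup_{0≤s≤t} max(y_n + f_n(s) - f_{n-1}^Λ(s), 0) for n ≥ 1. Define the last passage value g[(0,m)→(t,n)] = sup over m ≤ t_m ≤ ... ≤ t_n = t of [g_m(t_m) + Σ_{k=m+1}^n (g_k(t_k) - g_k(t_{k-1}))] for continuous g_k with g_k(0)=0. Then for all n ≥ 0 and t ≥ 0: -f_n^Λ(t) = max_{0≤m≤n} { (-f)[(0,m)→(t,n)]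 - y_m }. -/
noncomputable section


def lppSet (g : ℕ → ℝ → ℝ) (m n : ℕ) (t : ℝ) : Set ℝ :=
  {v : ℝ | ∃ s : ℕ → ℝ, 0 ≤ s m ∧ s n = t ∧
    (∀ k, m ≤ k → k < n → s k ≤ s (k + 1)) ∧
    v = g m (s m) + ∑ k ∈ Finset.Icc (m + 1) n, (g k (s k) - g k (s (k - 1)))}

lemma chain_mono {s : ℕ → ℝ} {m n : ℕ} (h : ∀ k, m ≤ k → k < n → s k ≤ s (k + 1))
    {i j : ℕ} (hmi : m ≤ i) (hij : i ≤ j) (hjn : j ≤ n) : s i ≤ s j := by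
  induction j, hij using Nat.le_induction with
  | base => exact le_rfl
  | succ j hij ih =>
    exact le_trans (ih (by omega)) (h j (by omega) (by omega))

lemma lppSet_nonempty (g : ℕ → ℝ → ℝ) (m n : ℕ) {t : ℝ} (ht : 0 ≤ t) :
    (lppSet g m n t).Nonempty := by
  refine ⟨_, fun k => if k < n then 0 else t, ?_, ?_, ?_, rfl⟩
  · dsimp only; split_ifs <;> [exact le_rfl; exact ht]
  · simp
  · intro k hmk hkn
    dsimp only
    rw [if_pos hkn]
    split_ifs <;> [exact le_rfl; exact ht]

lemma lppSet_self (g : ℕ → ℝ → ℝ) (n : ℕ) {t : ℝ} (ht : 0 ≤ t) :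
    lppSet g n n t = {g n t} := by
  ext v
  simp only [lppSet, Set.mem_setOf_eq, Set.mem_singleton_iff]
  constructor
  · rintro ⟨s, hs0, hst, -, rfl⟩
    rw [Finset.Icc_eq_empty (by omega), Finset.sum_empty, hst, add_zero]
  · rintro rfl
    exact ⟨fun _ => t, ht, rfl, fun k h1 h2 => absurd h2 (by omega),
      by rw [Finset.Icc_eq_empty (by omega), Finset.sum_empty, add_zero]⟩

lemma lppSet_bdd {g : ℕ → ℝ → ℝ} (hg : ∀ k, ContinuousOn (g k) (Set.Ici 0))
    (n : ℕ) {t : ℝ} (ht : 0 ≤ t) :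
    ∃ C : ℝ, ∀ m u, m ≤ n → 0 ≤ u → u ≤ t → ∀ v ∈ lppSet g m n u, v ≤ C := by
  have hM : ∀ k : ℕ, ∃ M : ℝ, ∀ x ∈ Set.Icc (0:ℝ) t, |g k x| ≤ M := by
    intro k
    obtain ⟨M, hM⟩ := isCompact_Icc.exists_bound_of_continuousOn
      ((hg k).mono (fun x hx => hx.1))
    exact ⟨M, fun x hx => by simpa [Real.norm_eq_abs] using hM x hx⟩
  choose M hMle using hM
  have hM0 : ∀ k, 0 ≤ M k := fun k => (abs_nonneg _).trans (hMle k 0 ⟨le_rfl, ht⟩)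
  refine ⟨∑ k ∈ Finset.range (n+1), 3 * M k, ?_⟩
  rintro m u hmn hu0 hut v ⟨s, hs0, hsn, hmono, rfl⟩
  have hmem : ∀ k, m ≤ k → k ≤ n → s k ∈ Set.Icc (0:ℝ) t := by
    intro k hmk hkn
    refine ⟨le_trans hs0 (chain_mono hmono le_rfl hmk hkn), ?_⟩
    have : s k ≤ s n := chain_mono hmono hmk hkn le_rfl
    rw [hsn] at this
    exact this.trans hut
  have h1 : g m (s m) ≤ M m := le_trans (le_abs_self _) (hMle m _ (hmem m le_rfl hmn))
  have h2 : ∀ k ∈ Finset.Icc (m+1) n, g k (s k) - g k (s (k-1)) ≤ 2 * M k := by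
    intro k hk
    rw [Finset.mem_Icc] at hk
    have hk1 := hMle k _ (hmem k (by omega) hk.2)
    have hk2 := hMle k _ (hmem (k-1) (by omega) (by omega))
    have := abs_le.mp hk1
    have := abs_le.mp hk2
    linarith
  calc g m (s m) + ∑ k ∈ Finset.Icc (m+1) n, (g k (s k) - g k (s (k-1)))
      ≤ M m + ∑ k ∈ Finset.Icc (m+1) n, 2 * M k :=
        add_le_add h1 (Finset.sum_le_sum h2)
    _ ≤ (∑ k ∈ Finset.range (n+1), M k) + ∑ k ∈ Finset.range (n+1), 2 * M k := by
        refine add_le_add ?_ ?_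
        · exact Finset.single_le_sum (fun k _ => hM0 k) (Finset.mem_range.mpr (by omega))
        · refine Finset.sum_le_sum_of_subset_of_nonneg ?_ (fun k _ _ => by linarith [hM0 k])
          intro k hk
          rw [Finset.mem_Icc] at hk
          exact Finset.mem_range.mpr (by omega)
    _ = ∑ k ∈ Finset.range (n+1), 3 * M k := by
        rw [← Finset.sum_add_distrib]
        exact Finset.sum_congr rfl (fun k _ => by ring)

lemma lppSet_extend {g : ℕ → ℝ → ℝ} {m n : ℕ} (hmn : m ≤ n) {u t v : ℝ}
    (hut : u ≤ t) (hv : v ∈ lppSet g m n u) :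
    v + (g (n+1) t - g (n+1) u) ∈ lppSet g m (n+1) t := by
  obtain ⟨s, hs0, hsn, hmono, rfl⟩ := hv
  refine ⟨fun k => if k ≤ n then s k else t, ?_, ?_, ?_, ?_⟩
  · simpa [hmn] using hs0
  · simp
  · intro k hmk hk
    dsimp only
    rcases Nat.lt_or_ge k n with h | h
    · rw [if_pos (le_of_lt h), if_pos (by omega)]
      exact hmono k hmk h
    · have hkn : k = n := by omega
      subst hkn
      rw [if_pos le_rfl, if_neg (by omega)]
      rw [hsn]
      exact hut
  · rw [Finset.sum_Icc_succ_top (by omega : m + 1 ≤ n + 1)]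
    have hmid : ∀ k ∈ Finset.Icc (m+1) n,
        (g k (if k ≤ n then s k else t) - g k (if k - 1 ≤ n then s (k-1) else t))
          = g k (s k) - g k (s (k-1)) := by
      intro k hk
      rw [Finset.mem_Icc] at hk
      rw [if_pos hk.2, if_pos (by omega)]
    rw [Finset.sum_congr rfl hmid]
    simp only [Nat.add_sub_cancel, if_pos hmn, if_pos (le_rfl : n ≤ n),
      if_neg (by omega : ¬ n + 1 ≤ n)]
    rw [hsn]
    ring

lemma lppSet_restrict {g : ℕ → ℝ → ℝ} {m n : ℕ} (hmn : m ≤ n) {t v : ℝ}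
    (hv : v ∈ lppSet g m (n+1) t) :
    ∃ u, 0 ≤ u ∧ u ≤ t ∧ v - (g (n+1) t - g (n+1) u) ∈ lppSet g m n u := by
  obtain ⟨s, hs0, hsn, hmono, rfl⟩ := hv
  have hu0 : 0 ≤ s n := le_trans hs0 (chain_mono hmono le_rfl hmn (by omega))
  have hut : s n ≤ t := by
    have := hmono n hmn (by omega)
    rw [hsn] at this
    exact this
  refine ⟨s n, hu0, hut, s, hs0, rfl, fun k h1 h2 => hmono k h1 (by omega), ?_⟩
  rw [Finset.sum_Icc_succ_top (by omega : m + 1 ≤ n + 1), hsn]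
  simp only [Nat.add_sub_cancel]
  ring
/-- The last-passage value `g[(0,m) → (t,n)]`: supremum over nondecreasing jump
times `0 ≤ t_m ≤ ⋯ ≤ t_n = t` of `g_m(t_m) + Σ_{k=m+1}^n (g_k(t_k) - g_k(t_{k-1}))`. -/
def lppValue (g : ℕ → ℝ → ℝ) (m n : ℕ) (t : ℝ) : ℝ :=
  sSup {v : ℝ | ∃ s : ℕ → ℝ, 0 ≤ s m ∧ s n = t ∧
    (∀ k, m ≤ k → k < n → s k ≤ s (k + 1)) ∧
    v = g m (s m) + ∑ k ∈ Finset.Icc (m + 1) n, (g k (s k) - g k (s (k - 1)))}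


lemma lppValue_eq (g : ℕ → ℝ → ℝ) (m n : ℕ) (t : ℝ) :
    lppValue g m n t = sSup (lppSet g m n t) := rfl

/-- Duality between the Skorokhod reflection process and last passage percolation:
`-f_n^Λ(t) = max_{0 ≤ m ≤ n} { (-f)[(0,m) → (t,n)] - y_m }`. -/
theorem reflection_lpp_duality (y : ℕ → ℝ) (hy : ∀ n, y (n + 1) ≤ y n)
    (f : ℕ → ℝ → ℝ) (hf : ∀ n, ContinuousOn (f n) (Set.Ici 0))
    (hf0 : ∀ n, f n 0 = 0)
    (fΛ : ℕ → ℝ → ℝ)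
    (hΛ0 : ∀ t, fΛ 0 t = y 0 + f 0 t)
    (hΛ : ∀ n t, fΛ (n + 1) t = y (n + 1) + f (n + 1) t -
      sSup ((fun s => max (y (n + 1) + f (n + 1) s - fΛ n s) 0) '' Set.Icc 0 t)) :
    ∀ (n : ℕ) (t : ℝ), 0 ≤ t →
      -fΛ n t =
        (Finset.range (n + 1)).sup' Finset.nonempty_range_add_one
          (fun m => lppValue (fun k s => -(f k s)) m n t - y m) := by
  set g : ℕ → ℝ → ℝ := fun k s => -(f k s) with hg_def
  have hg : ∀ k, ContinuousOn (g k) (Set.Ici 0) := fun k => (hf k).neg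
  have hyle : ∀ {a b : ℕ}, a ≤ b → y b ≤ y a := fun h => antitone_nat_of_succ_le hy h
  have hfΛ0 : ∀ n, fΛ n 0 = y n := by
    intro n
    induction n with
    | zero => rw [hΛ0, hf0, add_zero]
    | succ n ih =>
      rw [hΛ, Set.Icc_self, Set.image_singleton, csSup_singleton, hf0, ih,
        max_eq_right (by linarith [hy n])]
      ring
  have hself : ∀ (k : ℕ) (t : ℝ), 0 ≤ t → lppValue g k k t = g k t := by
    intro k t ht
    rw [lppValue_eq, lppSet_self g k ht, csSup_singleton]
  intro n
  induction n with
  | zero =>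
    intro t ht
    rw [hΛ0]
    have hr : (Finset.range (0 + 1)).sup' Finset.nonempty_range_add_one
        (fun m => lppValue g m 0 t - y m) = lppValue g 0 0 t - y 0 := by
      refine le_antisymm (Finset.sup'_le _ _ ?_)
        (Finset.le_sup' (fun m => lppValue g m 0 t - y m) (Finset.self_mem_range_succ 0))
      intro m hm
      rw [Finset.mem_range] at hm
      have : m = 0 := by omega
      subst this
      exact le_rfl
    rw [hr, hself 0 t ht]
    simp only [hg_def]
    ring
  | succ n ih =>
    intro t ht
    -- bounds
    obtain ⟨C, hC⟩ := lppSet_bdd hg n ht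
    obtain ⟨C', hC'⟩ := lppSet_bdd hg (n+1) ht
    have hBdd : ∀ m u, m ≤ n → 0 ≤ u → u ≤ t → BddAbove (lppSet g m n u) :=
      fun m u hm hu0 hut => ⟨C, fun v hv => hC m u hm hu0 hut v hv⟩
    have hBdd' : ∀ m, m ≤ n + 1 → BddAbove (lppSet g m (n+1) t) :=
      fun m hm => ⟨C', fun v hv => hC' m t hm ht le_rfl v hv⟩
    have hLle : ∀ m u, m ≤ n → 0 ≤ u → u ≤ t → lppValue g m n u ≤ C :=
      fun m u hm hu0 hut => csSup_le (lppSet_nonempty g m n hu0) (hC m u hm hu0 hut)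
    -- the sup set A
    set a : ℝ → ℝ := fun s => y (n+1) + f (n+1) s - fΛ n s with ha_def
    set A : Set ℝ := (fun s => max (a s) 0) '' Set.Icc 0 t with hA_def
    have hAne : A.Nonempty := ⟨_, ⟨0, ⟨le_rfl, ht⟩, rfl⟩⟩
    obtain ⟨Mf, hMf⟩ := isCompact_Icc.exists_bound_of_continuousOn
      ((hf (n+1)).mono (fun x (hx : x ∈ Set.Icc (0:ℝ) t) => hx.1))
    have ha_bd : ∀ s ∈ Set.Icc (0:ℝ) t, a s ≤ y (n+1) + Mf + (C - y n) := by
      intro s hs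
      have hfs : f (n+1) s ≤ Mf := by
        have := hMf s hs
        rw [Real.norm_eq_abs] at this
        exact (le_abs_self _).trans this
      have hfn : -fΛ n s ≤ C - y n := by
        rw [ih s hs.1]
        refine Finset.sup'_le _ _ ?_
        intro m hm
        rw [Finset.mem_range] at hm
        have h1 := hLle m s (by omega) hs.1 hs.2
        have h2 := hyle (show m ≤ n by omega)
        linarith
      simp only [ha_def]
      linarith
    have hABdd : BddAbove A := by
      refine ⟨max (y (n+1) + Mf + (C - y n)) 0, ?_⟩
      rintro x ⟨s, hs, rfl⟩
      exact max_le_max (ha_bd s hs) le_rfl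
    -- key recursion inequality
    have key : ∀ m, m ≤ n → ∀ u, 0 ≤ u → u ≤ t →
        lppValue g m n u + (g (n+1) t - g (n+1) u) ≤ lppValue g m (n+1) t := by
      intro m hm u hu0 hut
      have h1 : lppValue g m n u ≤ lppValue g m (n+1) t - (g (n+1) t - g (n+1) u) := by
        refine csSup_le (lppSet_nonempty g m n hu0) ?_
        intro v hv
        have := le_csSup (hBdd' m (by omega)) (lppSet_extend hm hut hv)
        rw [← lppValue_eq] at this
        linarith
      linarith
    have hΛt : -fΛ (n+1) t = sSup A - y (n+1) + g (n+1) t := by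
      rw [hΛ]
      have hAeq : (fun s => max (y (n + 1) + f (n + 1) s - fΛ n s) 0) '' Set.Icc 0 t = A := rfl
      rw [hAeq]
      simp only [hg_def]
      ring
    rw [hΛt]
    refine le_antisymm ?_ (Finset.sup'_le _ _ ?_)
    · -- LHS ≤ RHS
      have hs1 : sSup A ≤ ((Finset.range (n + 1 + 1)).sup' Finset.nonempty_range_add_one
          (fun m => lppValue g m (n+1) t - y m)) + y (n+1) - g (n+1) t := by
        refine csSup_le hAne ?_
        rintro x ⟨s, hs, rfl⟩
        have htop : g (n+1) t - y (n+1) ≤ (Finset.range (n + 1 + 1)).sup'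
            Finset.nonempty_range_add_one (fun m => lppValue g m (n+1) t - y m) := by
          have := Finset.le_sup' (fun m => lppValue g m (n+1) t - y m)
            (Finset.self_mem_range_succ (n+1))
          rw [hself (n+1) t ht] at this
          exact this
        refine max_le ?_ (by linarith)
        -- a s ≤ ...
        have has : a s = y (n+1) + f (n+1) s + ((Finset.range (n + 1)).sup'
            Finset.nonempty_range_add_one (fun m => lppValue g m n s - y m)) := by
          simp only [ha_def]
          rw [← ih s hs.1]
          ring
        rw [has]
        have hsup : ((Finset.range (n + 1)).sup' Finset.nonempty_range_add_one
            (fun m => lppValue g m n s - y m)) ≤ ((Finset.range (n + 1 + 1)).sup'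
            Finset.nonempty_range_add_one (fun m => lppValue g m (n+1) t - y m))
            - g (n+1) t + g (n+1) s := by
          refine Finset.sup'_le _ _ ?_
          intro m hm
          rw [Finset.mem_range] at hm
          have h1 := key m (by omega) s hs.1 hs.2
          have h2 := Finset.le_sup' (fun m => lppValue g m (n+1) t - y m)
            (Finset.mem_range.mpr (show m < n + 1 + 1 by omega))
          linarith
        have hgf : g (n+1) s = -(f (n+1) s) := rfl
        linarith [hgf ▸ hsup]
      linarith
    · -- RHS ≤ LHS
      intro m hm
      rw [Finset.mem_range] at hm
      rcases Nat.lt_or_ge m (n+1) with hmn | hmn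
      · -- m ≤ n
        have hmn' : m ≤ n := by omega
        have h0 : lppValue g m (n+1) t ≤ sSup A - y (n+1) + g (n+1) t + y m := by
          refine csSup_le (lppSet_nonempty g m (n+1) ht) ?_
          intro v hv
          obtain ⟨u, hu0, hut, hv'⟩ := lppSet_restrict hmn' hv
          have h1 : v - (g (n+1) t - g (n+1) u) ≤ lppValue g m n u :=
            le_csSup (hBdd m u hmn' hu0 hut) hv'
          have h2 : lppValue g m n u - y m ≤ -fΛ n u := by
            rw [ih u hu0]
            exact Finset.le_sup' (fun m => lppValue g m n u - y m)
              (Finset.mem_range.mpr (show m < n + 1 by omega))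
          have h3 : a u ≤ sSup A :=
            le_trans (le_max_left _ _) (le_csSup hABdd ⟨u, ⟨hu0, hut⟩, rfl⟩)
          have h4 : a u = y (n+1) + f (n+1) u - fΛ n u := rfl
          have h5 : g (n+1) u = -(f (n+1) u) := rfl
          linarith
        linarith
      · -- m = n + 1
        have : m = n + 1 := by omega
        subst this
        rw [hself (n+1) t ht]
        have h0 : (0:ℝ) ≤ sSup A :=
          le_trans (le_max_right _ _) (le_csSup hABdd ⟨0, ⟨le_rfl, ht⟩, rfl⟩)
        linarith

end
end
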